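/- Let $\Field$ be a field and $n \geq 1$. Intersection with $\SL_n(\Field)$ gives an inclusion-preserving bijection between the parabolic subgroups of $\GL_n(\Field)$ (stabilizers of flags of nonzero proper subspaces of $\Field^n$) and the parabolic subgroups of $\SL_n(\Field)$; equivalently, two flags of subspaces of $\Field^n$ have the same stabilizer in $\GL_n(\Field)$ if and only if they have the same stabilizer in $\SL_n(\Field)$, and the flag stabilized is determined by the stabilizer in $\SL_n(\Field)$. -/

import Mathlib

section
variable (F : Type*) [Field F] (n : ℕ)

/-- A flag of `k` nonzero proper subspaces of `F^n`: a strictly increasing chain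
`0 ⊊ V₀ ⊊ ⋯ ⊊ V_{k-1} ⊊ F^n`. -/
def FlagIn (k : ℕ) : Type _ :=
  {V : Fin k → Submodule F (Fin n → F) //
    StrictMono V ∧ ∀ i, V i ≠ ⊥ ∧ V i ≠ ⊤}

/-- The stabilizer in `GL_n(F)` of a flag, as a set. -/
def glFlagStab {k : ℕ} (V : FlagIn F n k) : Set (Matrix.GeneralLinearGroup (Fin n) F) :=
  {g | ∀ i, Submodule.map (Matrix.mulVecLin (g : Matrix (Fin n) (Fin n) F)) (V.1 i) = V.1 i}

/-- The stabilizer in `SL_n(F)` of a flag, as a set. -/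
def slFlagStab {k : ℕ} (V : FlagIn F n k) : Set (Matrix.SpecialLinearGroup (Fin n) F) :=
  {g | ∀ i, Submodule.map (Matrix.mulVecLin (g : Matrix (Fin n) (Fin n) F)) (V.1 i) = V.1 i}

end

/-!
A subspace `W` stable under the transvections `x ↦ x + f x • u` that preserve a chain `𝒞` is
comparable with every `C ∈ 𝒞`: otherwise take `w ∈ W \ C`, `u ∈ C \ W` and `f` vanishing on `C`
with `f w = 1`; the transvection moves `w` to `w + u ∉ W`. If moreover `L ⊊ W ⊊ U` and no member
of `𝒞` lies strictly between `L` and `U`, take `w ∈ W \ L`, `v ∈ U \ W` and `f` vanishing on `L`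
with `f w = 1`; the transvection along `u = v - f v • w` moves `w` to `v ∉ W`. So a nonzero proper
subspace stable under these transvections, all of which lie in `SL_n(F)`, belongs to the finite
chain `𝒞`: a flag is recovered from its stabilizer in `SL_n(F)`, which is the intersection of its
stabilizer in `GL_n(F)` with `SL_n(F)`.
-/

lemma IsChain.supClosed {α : Type*} [Lattice α] {s : Set α} (hs : IsChain (· ≤ ·) s) :
    SupClosed s := fun _ ha _ hb =>
  (hs.total ha hb).elim (fun h => (sup_eq_right.2 h).symm ▸ hb) fun h => (sup_eq_left.2 h).symm ▸ ha

lemma IsChain.infClosed {α : Type*} [Lattice α] {s : Set α} (hs : IsChain (· ≤ ·) s) :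
    InfClosed s := fun _ ha _ hb =>
  (hs.total ha hb).elim (fun h => (inf_eq_left.2 h).symm ▸ ha) fun h => (inf_eq_right.2 h).symm ▸ hb

section TransvectionInvariant

variable {K E : Type*} [Field K] [AddCommGroup E] [Module K E]

open Module LinearMap

/-- As `f u = 0`, the map `x ↦ x + f x • u` is a transvection; the side condition makes it
preserve every member of `𝒞`. -/
def TransvectionInvariant (𝒞 : Set (Submodule K E)) (W : Submodule K E) : Prop :=
  ∀ (f : Dual K E) (u : E), f u = 0 → (∀ C ∈ 𝒞, u ∈ C ∨ C ≤ ker f) → ∀ x ∈ W, x + f x • u ∈ W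

lemma Submodule.exists_dual_eq_one_of_notMem {p : Submodule K E} {w : E} (hw : w ∉ p) :
    ∃ f : Dual K E, f w = 1 ∧ p ≤ ker f := by
  obtain ⟨f, hfw, hpf⟩ := Submodule.exists_le_ker_of_notMem hw
  refine ⟨(f w)⁻¹ • f, inv_mul_cancel₀ hfw, fun x hx => ?_⟩
  simp [mem_ker.mp (hpf hx)]

variable {𝒞 : Set (Submodule K E)} {W : Submodule K E}

lemma TransvectionInvariant.mem {f : Dual K E} {u w : E} (hW : TransvectionInvariant 𝒞 W)
    (hfu : f u = 0) (h𝒞 : ∀ C ∈ 𝒞, u ∈ C ∨ C ≤ ker f) (hw : w ∈ W) (hfw : f w = 1) : u ∈ W := by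
  have := hW f u hfu h𝒞 w hw
  rwa [hfw, one_smul, W.add_mem_iff_right hw] at this

lemma TransvectionInvariant.le_or_ge (hW : TransvectionInvariant 𝒞 W) {C : Submodule K E}
    (hC : ∀ D ∈ 𝒞, D ≤ C ∨ C ≤ D) : W ≤ C ∨ C ≤ W := by
  by_contra! h
  obtain ⟨w, hwW, hwC⟩ := SetLike.not_le_iff_exists.mp h.1
  obtain ⟨u, huC, huW⟩ := SetLike.not_le_iff_exists.mp h.2
  obtain ⟨f, hfw, hCf⟩ := Submodule.exists_dual_eq_one_of_notMem hwC
  refine huW (hW.mem (hCf huC) (fun D hD => ?_) hwW hfw)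
  exact (hC D hD).elim (fun hDC => .inr (hDC.trans hCf)) fun hCD => .inl (hCD huC)

lemma TransvectionInvariant.eq_or_eq (hW : TransvectionInvariant 𝒞 W) {L U : Submodule K E}
    (hLW : L ≤ W) (hWU : W ≤ U) (h𝒞 : ∀ D ∈ 𝒞, D ≤ L ∨ U ≤ D) : W = L ∨ W = U := by
  by_contra! h
  obtain ⟨w, hwW, hwL⟩ := SetLike.exists_of_lt (lt_of_le_of_ne hLW h.1.symm)
  obtain ⟨v, hvU, hvW⟩ := SetLike.exists_of_lt (lt_of_le_of_ne hWU h.2)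
  obtain ⟨f, hfw, hLf⟩ := Submodule.exists_dual_eq_one_of_notMem hwL
  have hu : v - f v • w ∈ W := by
    refine hW.mem (by simp [hfw]) (fun D hD => ?_) hwW hfw
    exact (h𝒞 D hD).elim (fun hDL => .inr (hDL.trans hLf))
      fun hUD => .inl (hUD (sub_mem hvU (U.smul_mem _ (hWU hwW))))
  exact hvW (by simpa using add_mem hu (W.smul_mem (f v) hwW))

lemma TransvectionInvariant.mem_of_isChain (hW : TransvectionInvariant 𝒞 W)
    (h𝒞 : IsChain (· ≤ ·) 𝒞) (hfin : 𝒞.Finite) (hbot : W ≠ ⊥) (htop : W ≠ ⊤) : W ∈ 𝒞 := by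
  set below := {C ∈ 𝒞 | C ≤ W}
  set above := {C ∈ 𝒞 | W ≤ C}
  have hsplit (D) (hD : D ∈ 𝒞) : D ≤ sSup below ∨ sInf above ≤ D :=
    (hW.le_or_ge fun C hC => h𝒞.total hC hD).symm.imp (fun h => le_sSup ⟨hD, h⟩)
      fun h => sInf_le ⟨hD, h⟩
  rcases hW.eq_or_eq (sSup_le fun _ h => h.2) (le_sInf fun _ h => h.2) hsplit with h | h
  · rcases below.eq_empty_or_nonempty with hS | hS
    · exact absurd (by rw [h, hS, sSup_empty]) hbot
    · exact h ▸ h𝒞.supClosed.sSup_mem_of_nonempty (hfin.subset (Set.sep_subset _ _)) hS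
        (Set.sep_subset _ _)
  · rcases above.eq_empty_or_nonempty with hS | hS
    · exact absurd (by rw [h, hS, sInf_empty]) htop
    · exact h ▸ h𝒞.infClosed.sInf_mem_of_nonempty (hfin.subset (Set.sep_subset _ _)) hS
        (Set.sep_subset _ _)

lemma Submodule.map_transvection_eq {f : Dual K E} {u : E} (hfu : f u = 0) {C : Submodule K E}
    (hC : u ∈ C ∨ C ≤ ker f) : C.map (transvection f u) = C := by
  have map_le (u' : E) (hC' : u' ∈ C ∨ C ≤ ker f) : C.map (transvection f u') ≤ C := by
    rintro _ ⟨x, hx, rfl⟩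
    rw [transvection.apply]
    exact hC'.elim (fun hu => C.add_mem hx (C.smul_mem _ hu)) fun hCf => by
      simpa [mem_ker.mp (hCf hx)] using hx
  refine le_antisymm (map_le u hC) fun x hx => ⟨transvection f (-u) x,
    map_le (-u) (hC.imp_left C.neg_mem) ⟨x, hx, rfl⟩, ?_⟩
  rw [transvection.comp_of_left_eq_apply (by simp [hfu]), add_neg_cancel,
    transvection.of_right_eq_zero, id_apply]

end TransvectionInvariant

lemma Matrix.exists_specialLinearGroup_mulVecLin_eq_transvection {F ι : Type*} [Field F]
    [Fintype ι] [DecidableEq ι] {f : Module.Dual F (ι → F)} {u : ι → F} (hfu : f u = 0) :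
    ∃ g : Matrix.SpecialLinearGroup ι F,
      (g : Matrix ι ι F).mulVecLin = LinearMap.transvection f u :=
  ⟨⟨LinearMap.toMatrix' (LinearMap.transvection f u), by
    rw [LinearMap.det_toMatrix', LinearMap.transvection.det, hfu, add_zero]⟩, by
    rw [← Matrix.toLin'_apply', Matrix.toLin'_toMatrix']⟩

namespace FlagIn

variable {F : Type*} [Field F] {n k k₁ k₂ : ℕ}

lemma isChain_range (V : FlagIn F n k) : IsChain (· ≤ ·) (Set.range V.1) :=
  V.2.1.monotone.isChain_range

lemma glFlagStab_congr {V₁ : FlagIn F n k₁} {V₂ : FlagIn F n k₂}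
    (h : Set.range V₁.1 = Set.range V₂.1) : glFlagStab F n V₁ = glFlagStab F n V₂ := by
  ext g
  have mem_iff (k) (V : FlagIn F n k) : g ∈ glFlagStab F n V ↔
      ∀ W ∈ Set.range V.1, W.map (g : Matrix (Fin n) (Fin n) F).mulVecLin = W := by
    rw [Set.forall_mem_range]; rfl
  rw [mem_iff, mem_iff, h]

lemma slFlagStab_eq_preimage (V : FlagIn F n k) :
    slFlagStab F n V = Matrix.SpecialLinearGroup.toGL ⁻¹' glFlagStab F n V :=
  rfl

lemma transvectionInvariant_of_slFlagStab_subset {V₁ : FlagIn F n k₁} {V₂ : FlagIn F n k₂}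
    (h : slFlagStab F n V₂ ⊆ slFlagStab F n V₁) (i : Fin k₁) :
    TransvectionInvariant (Set.range V₂.1) (V₁.1 i) := by
  intro f u hfu hV₂ x hx
  obtain ⟨g, hg⟩ := Matrix.exists_specialLinearGroup_mulVecLin_eq_transvection hfu
  have hgV₂ : g ∈ slFlagStab F n V₂ := fun j =>
    hg ▸ Submodule.map_transvection_eq hfu (hV₂ _ ⟨j, rfl⟩)
  rw [← h hgV₂ i, hg]
  exact ⟨x, hx, rfl⟩

lemma range_subset_of_slFlagStab_subset {V₁ : FlagIn F n k₁} {V₂ : FlagIn F n k₂}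
    (h : slFlagStab F n V₂ ⊆ slFlagStab F n V₁) : Set.range V₁.1 ⊆ Set.range V₂.1 := by
  rintro _ ⟨i, rfl⟩
  exact (transvectionInvariant_of_slFlagStab_subset h i).mem_of_isChain V₂.isChain_range
    (Set.finite_range _) (V₁.2.2 i).1 (V₁.2.2 i).2

end FlagIn

theorem parabolic_gl_sl_bijection_general (F : Type*) [Field F] (n : ℕ)
    (k₁ k₂ : ℕ) (V₁ : FlagIn F n k₁) (V₂ : FlagIn F n k₂) :
    (glFlagStab F n V₁ = glFlagStab F n V₂ ↔ slFlagStab F n V₁ = slFlagStab F n V₂) ∧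
    (slFlagStab F n V₁ = slFlagStab F n V₂ → Set.range V₁.1 = Set.range V₂.1) := by
  have range_eq (h : slFlagStab F n V₁ = slFlagStab F n V₂) : Set.range V₁.1 = Set.range V₂.1 :=
    (FlagIn.range_subset_of_slFlagStab_subset h.ge).antisymm
      (FlagIn.range_subset_of_slFlagStab_subset h.le)
  refine ⟨⟨fun h => ?_, fun h => FlagIn.glFlagStab_congr (range_eq h)⟩, range_eq⟩
  rw [FlagIn.slFlagStab_eq_preimage, FlagIn.slFlagStab_eq_preimage, h]

/-- Two flags of nonzero proper subspaces of `F^n` have the same stabilizer in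
`GL_n(F)` if and only if they have the same stabilizer in `SL_n(F)`; moreover a flag
is determined (as a chain of subspaces) by its stabilizer in `SL_n(F)`.  This is the
bijection, given by intersecting with `SL_n(F)`, between parabolic subgroups of
`GL_n(F)` and of `SL_n(F)`. -/
theorem parabolic_gl_sl_bijection (F : Type*) [Field F] (n : ℕ) (hn : 1 ≤ n)
    (k₁ k₂ : ℕ) (V₁ : FlagIn F n k₁) (V₂ : FlagIn F n k₂) :
    (glFlagStab F n V₁ = glFlagStab F n V₂ ↔ slFlagStab F n V₁ = slFlagStab F n V₂) ∧
    (slFlagStab F n V₁ = slFlagStab F n V₂ → Set.range V₁.1 = Set.range V₂.1) :=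
  parabolic_gl_sl_bijection_general F n k₁ k₂ V₁ V₂
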